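/- Let x = (x_n)_{n∈ω} be the sequence in [0,1] defined by x_0 = 1/3 and x_n = 2^{-ν₂(n)} for nonzero n, where ν₂(n) is the 2-adic valuation of n (the maximal k with 2^k dividing n). Then x has no H-limit points, i.e., Λ_x(H) = ∅; equivalently, there is no infinite set E ⊆ ω such that the subsequence (x_n)_{n∈FS(E)} converges in the ordinary sense. -/

import Mathlib

open Set Filter Topology

/-- `FS(D)`: the set of finite sums of distinct elements of `D`. -/
def FS (D : Set ℕ) : Set ℕ :=
  {n | ∃ α : Finset ℕ, ↑α ⊆ D ∧ α.Nonempty ∧ ∑ i ∈ α, i = n}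

variable {X : Type*}

/-- `η` is an `FS`-limit point of the sequence `x : ω → X`. -/
def IsFSLimitPoint [TopologicalSpace X] (x : ℕ → X) (η : X) : Prop :=
  ∃ D : Set ℕ, D.Infinite ∧ ∀ U ∈ 𝓝 η, ∃ K : Set ℕ, K.Finite ∧
    ∀ n ∈ FS (D \ K), x n ∈ U

/-- `η` is an `FS`-cluster point of the sequence `x : ω → X`. -/
def IsFSClusterPoint [TopologicalSpace X] (x : ℕ → X) (η : X) : Prop :=
  ∀ U ∈ 𝓝 η, ∃ D : Set ℕ, D.Infinite ∧ FS D ⊆ {n | x n ∈ U}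

/-- The Hindman ideal `H`: sets which are not IP-sets. -/
def hindmanIdeal : Set (Set ℕ) :=
  {S | ∀ D : Set ℕ, D.Infinite → ¬ FS D ⊆ S}

/-- `η` is an `I`-limit point of `x`: some subsequence indexed by a set `S ∉ I`
converges (in the ordinary sense) to `η`. -/
def IsIdealLimitPoint [TopologicalSpace X] (I : Set (Set ℕ)) (x : ℕ → X) (η : X) : Prop :=
  ∃ S : Set ℕ, S ∉ I ∧ ∀ U ∈ 𝓝 η, {n ∈ S | x n ∉ U}.Finite

/-!
For an infinite `E`, the 2-adic valuation `ν₂` on `FS E` takes some value `k`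
infinitely often and also values `> k` infinitely often, so `x` is infinitely often `2⁻ᵏ` and
infinitely often `≤ 2⁻ᵏ⁻¹` along `FS E`. Indeed, if some level `{e ∈ E | ν₂ e = k}` is infinite,
then the sums of two of its elements have valuation `> k`; otherwise, for any `a ∈ E` infinitely
many `e ∈ E` have `ν₂ e > ν₂ a`, and then `ν₂ (a + e) = ν₂ a`.
-/

lemma subset_FS (E : Set ℕ) : E ⊆ FS E := fun a ha =>
  ⟨{a}, by simpa using ha, Finset.singleton_nonempty a, Finset.sum_singleton id a⟩

lemma add_mem_FS {E : Set ℕ} {a b : ℕ} (ha : a ∈ E) (hb : b ∈ E) (hab : a ≠ b) :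
    a + b ∈ FS E :=
  ⟨{a, b}, by simp [insert_subset_iff, ha, hb], Finset.insert_nonempty a {b},
    Finset.sum_pair hab⟩

lemma padicValNat_add_of_lt {p a b : ℕ} [Fact p.Prime] (ha : a ≠ 0)
    (h : padicValNat p a < padicValNat p b) : padicValNat p (a + b) = padicValNat p a := by
  have hb : b ≠ 0 := by rintro rfl; simp at h
  have := padicValRat.add_eq_of_lt (p := p) (q := a) (r := b) (by positivity)
    (by exact_mod_cast ha) (by exact_mod_cast hb)
    (by rw [padicValRat.of_nat, padicValRat.of_nat]; exact_mod_cast h)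
  rw [← Nat.cast_add, padicValRat.of_nat, padicValRat.of_nat] at this
  exact_mod_cast this

lemma padicValNat_two_lt_add {a b : ℕ} (ha : a ≠ 0) (hb : b ≠ 0)
    (h : padicValNat 2 a = padicValNat 2 b) : padicValNat 2 a < padicValNat 2 (a + b) := by
  obtain ⟨k, hk⟩ : ∃ k, padicValNat 2 a = k := ⟨_, rfl⟩
  have odd_cofactor : ∀ n ≠ 0, padicValNat 2 n = k → ∃ u, Odd u ∧ n = 2 ^ k * u := by
    intro n hn hnk
    obtain ⟨u, hu⟩ : 2 ^ k ∣ n := hnk ▸ pow_padicValNat_dvd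
    refine ⟨u, Nat.odd_iff.2 (Nat.two_dvd_ne_zero.1 fun h2 => ?_), hu⟩
    have : 2 ^ (k + 1) ∣ n := hu ▸ pow_succ 2 k ▸ mul_dvd_mul_left _ h2
    exact pow_succ_padicValNat_not_dvd hn (hnk ▸ this)
  obtain ⟨u, hu, rfl⟩ := odd_cofactor a ha hk
  obtain ⟨v, hv, rfl⟩ := odd_cofactor b hb (h ▸ hk)
  have hdvd : 2 ^ (k + 1) ∣ 2 ^ k * u + 2 ^ k * v := by
    rw [← mul_add, pow_succ]
    exact mul_dvd_mul_left _ (hu.add_odd hv).two_dvd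
  rw [hk]
  exact (padicValNat_dvd_iff_le (by positivity)).1 hdvd

lemma infinite_FS_padicValNat_two_gt {E : Set ℕ} {k : ℕ}
    (h : {e ∈ E | e ≠ 0 ∧ padicValNat 2 e = k}.Infinite) :
    {n ∈ FS E | k < padicValNat 2 n}.Infinite := by
  obtain ⟨a, haE, ha0, rfl⟩ := h.nonempty
  refine ((h.sdiff (finite_singleton a)).image (add_right_injective a).injOn).mono ?_
  rintro _ ⟨b, ⟨⟨hbE, hb0, hab⟩, hba⟩, rfl⟩
  exact ⟨add_mem_FS haE hbE (Ne.symm hba), padicValNat_two_lt_add ha0 hb0 hab.symm⟩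

lemma infinite_FS_padicValNat_eq {p : ℕ} [Fact p.Prime] {E : Set ℕ} {a : ℕ} (haE : a ∈ E)
    (ha0 : a ≠ 0) (h : {e ∈ E | padicValNat p a < padicValNat p e}.Infinite) :
    {n ∈ FS E | n ≠ 0 ∧ padicValNat p n = padicValNat p a}.Infinite := by
  refine (h.image (add_right_injective a).injOn).mono ?_
  rintro _ ⟨b, ⟨hbE, hab⟩, rfl⟩
  exact ⟨add_mem_FS haE hbE (by rintro rfl; omega), by simp [ha0], padicValNat_add_of_lt ha0 hab⟩

lemma exists_infinite_FS_padicValNat_two_eq_and_gt {E : Set ℕ} (hE : E.Infinite) :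
    ∃ k, {n ∈ FS E | n ≠ 0 ∧ padicValNat 2 n = k}.Infinite ∧
      {n ∈ FS E | k < padicValNat 2 n}.Infinite := by
  by_cases hlevel : ∃ k, {e ∈ E | e ≠ 0 ∧ padicValNat 2 e = k}.Infinite
  · obtain ⟨k, hk⟩ := hlevel
    exact ⟨k, hk.mono fun e he => ⟨subset_FS E he.1, he.2⟩, infinite_FS_padicValNat_two_gt hk⟩
  · push Not at hlevel
    obtain ⟨a, haE, ha0⟩ := (hE.sdiff (finite_singleton 0)).nonempty
    have hlow : (⋃ j ∈ Iic (padicValNat 2 a), {e ∈ E | e ≠ 0 ∧ padicValNat 2 e = j}).Finite :=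
      (finite_Iic _).biUnion fun j _ => hlevel j
    have hhigh : {e ∈ E | padicValNat 2 a < padicValNat 2 e}.Infinite := by
      refine ((hE.sdiff (finite_singleton 0)).sdiff hlow).mono ?_
      rintro e ⟨⟨heE, he0⟩, he⟩
      exact ⟨heE, not_le.1 fun hle => he (mem_biUnion hle ⟨heE, he0, rfl⟩)⟩
    exact ⟨_, infinite_FS_padicValNat_eq haE ha0 hhigh,
      hhigh.mono fun e he => ⟨subset_FS E he.1, he.2⟩⟩

lemma not_forall_finite_of_infinite_ge_of_infinite_le {α β : Type*} [LinearOrder β]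
    [TopologicalSpace β] [OrderTopology β] {x : α → β} {S : Set α} {a b : β} (hba : b < a)
    (ha : {n ∈ S | a ≤ x n}.Infinite) (hb : {n ∈ S | x n ≤ b}.Infinite) (η : β) :
    ¬ ∀ U ∈ 𝓝 η, {n ∈ S | x n ∉ U}.Finite := by
  intro hfin
  rcases lt_or_ge η a with hηa | hηa
  · exact ha ((hfin _ (Iio_mem_nhds hηa)).subset fun n hn => ⟨hn.1, not_lt.2 hn.2⟩)
  · exact hb ((hfin _ (Ioi_mem_nhds (hba.trans_le hηa))).subset
      fun n hn => ⟨hn.1, not_lt.2 hn.2⟩)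

lemma not_forall_finite_FS {x : ℕ → ℝ}
    (hx : ∀ n : ℕ, n ≠ 0 → x n = (2 : ℝ) ^ (-(padicValNat 2 n : ℤ)))
    {E : Set ℕ} (hE : E.Infinite) (η : ℝ) :
    ¬ ∀ U ∈ 𝓝 η, {n ∈ FS E | x n ∉ U}.Finite := by
  obtain ⟨k, hlevel, hhigh⟩ := exists_infinite_FS_padicValNat_two_eq_and_gt hE
  refine not_forall_finite_of_infinite_ge_of_infinite_le
    (a := (2 : ℝ) ^ (-(k : ℤ))) (b := (2 : ℝ) ^ (-(k : ℤ) - 1))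
    (zpow_lt_zpow_right₀ one_lt_two (by omega)) (hlevel.mono ?_) (hhigh.mono ?_) η
  · rintro n ⟨hn, hn0, hnk⟩
    exact ⟨hn, by rw [hx n hn0, hnk]⟩
  · rintro n ⟨hn, hkn⟩
    have hn0 : n ≠ 0 := by rintro rfl; simp at hkn
    exact ⟨hn, by rw [hx n hn0]; exact zpow_le_zpow_right₀ one_le_two (by omega)⟩

theorem no_hindman_limit_points_general
    (x : ℕ → ℝ)
    (hx : ∀ n : ℕ, n ≠ 0 → x n = (2 : ℝ) ^ (-(padicValNat 2 n : ℤ))) :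
    (∀ η : ℝ, ¬ IsIdealLimitPoint hindmanIdeal x η) ∧
      ¬ ∃ E : Set ℕ, E.Infinite ∧
          ∃ η : ℝ, ∀ U ∈ 𝓝 η, {n ∈ FS E | x n ∉ U}.Finite := by
  refine ⟨fun η ⟨S, hS, hconv⟩ => ?_,
    fun ⟨E, hE, η, hconv⟩ => not_forall_finite_FS hx hE η hconv⟩
  obtain ⟨D, hD, hDS⟩ : ∃ D : Set ℕ, D.Infinite ∧ FS D ⊆ S := by
    simpa [hindmanIdeal] using hS
  exact not_forall_finite_FS hx hD η fun U hU =>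
    (hconv U hU).subset fun n hn => ⟨hDS hn.1, hn.2⟩

theorem no_hindman_limit_points
    (x : ℕ → ℝ) (hx0 : x 0 = 1 / 3)
    (hx : ∀ n : ℕ, n ≠ 0 → x n = (2 : ℝ) ^ (-(padicValNat 2 n : ℤ))) :
    (∀ η : ℝ, ¬ IsIdealLimitPoint hindmanIdeal x η) ∧
      ¬ ∃ E : Set ℕ, E.Infinite ∧
          ∃ η : ℝ, ∀ U ∈ 𝓝 η, {n ∈ FS E | x n ∉ U}.Finite :=
  no_hindman_limit_points_general x hx
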